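/- arXiv:1312.4887 — 9 statements merged into one kernel-verified Lean document; each statement's English description precedes it below -/
import Mathlib

section
/- Let (Ω, 𝒜, P) be a probability space with a filtration (ℱ_t)_{t ∈ ℝ}, let α ∈ ℝ, and let Z : ℝ → Ω → ℝ be a process such that for every t the random variable Z_t is ℱ_t-measurable and square integrable, the process t ↦ exp(α t) · Z_t is a martingale with respect to (ℱ_t), and there is a constant c > 0 with E[Z_t²] = c for all t ∈ ℝ. Then α ≥ 0. -/
/-!
Conditional expectation is a contraction in `L²` (conditional Jensen for `x ↦ x²`), so the second
moment of a square-integrable martingale is nondecreasing in time. For `M t = exp (α t) Z t` the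
second moment is `exp (2 α t) c` with `c > 0`, which is nondecreasing only if `α ≥ 0`.
-/

open MeasureTheory

lemma integral_sq_condExp_le {Ω : Type*} {m m0 : MeasurableSpace Ω} {μ : Measure Ω}
    {f : Ω → ℝ} (hf : Integrable (fun ω => f ω ^ 2) μ) :
    ∫ ω, (μ[f | m] ω) ^ 2 ∂μ ≤ ∫ ω, f ω ^ 2 ∂μ := by
  have h := integral_norm_condExp_rpow_le (m := m) one_le_two (f := f)
    (by simpa [Real.norm_eq_abs, Real.rpow_two, sq_abs] using hf)
  simpa [Real.norm_eq_abs, Real.rpow_two, sq_abs] using h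

lemma Martingale.integral_sq_le_of_le {Ω ι : Type*} [Preorder ι] {m0 : MeasurableSpace Ω}
    {μ : Measure Ω} {ℱ : Filtration ι m0} [SigmaFiniteFiltration μ ℱ] {f : ι → Ω → ℝ}
    (hf : Martingale f ℱ μ) {s t : ι} (hst : s ≤ t) (ht : Integrable (fun ω => f t ω ^ 2) μ) :
    ∫ ω, f s ω ^ 2 ∂μ ≤ ∫ ω, f t ω ^ 2 ∂μ :=
  calc ∫ ω, f s ω ^ 2 ∂μ = ∫ ω, (μ[f t | ℱ s] ω) ^ 2 ∂μ :=
        integral_congr_ae <| (hf.condExp_ae_eq hst).symm.fun_comp (· ^ 2)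
    _ ≤ ∫ ω, f t ω ^ 2 ∂μ := integral_sq_condExp_le ht

theorem correlation_index_nonneg_general
    {Ω : Type*} {m0 : MeasurableSpace Ω} {P : Measure Ω} [IsProbabilityMeasure P]
    (ℱ : Filtration ℝ m0) (α : ℝ) (Z : ℝ → Ω → ℝ)
    (hL2 : ∀ t, MemLp (Z t) 2 P)
    (hmart : Martingale (fun t ω => Real.exp (α * t) * Z t ω) ℱ P)
    (c : ℝ) (hc : 0 < c)
    (hstat : ∀ t, ∫ ω, (Z t ω) ^ 2 ∂P = c) :
    0 ≤ α := by
  have hsecond (t : ℝ) : ∫ ω, (Real.exp (α * t) * Z t ω) ^ 2 ∂P = Real.exp (α * t) ^ 2 * c := by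
    simp_rw [mul_pow, integral_const_mul, hstat]
  have hle := Martingale.integral_sq_le_of_le hmart zero_le_one
    ((hL2 1).const_mul (Real.exp (α * 1))).integrable_sq
  rw [hsecond, hsecond, mul_zero, Real.exp_zero, one_pow, one_mul, mul_one] at hle
  have hsq : 1 ≤ Real.exp α ^ 2 := le_of_mul_le_mul_right (by simpa using hle) hc
  exact Real.one_le_exp_iff.mp ((one_le_sq_iff₀ (Real.exp_pos α).le).mp hsq)

theorem correlation_index_nonneg
    {Ω : Type*} {m0 : MeasurableSpace Ω} {P : Measure Ω} [IsProbabilityMeasure P]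
    (ℱ : Filtration ℝ m0) (α : ℝ) (Z : ℝ → Ω → ℝ)
    (hadapted : ∀ t, StronglyMeasurable[ℱ t] (Z t))
    (hL2 : ∀ t, MemLp (Z t) 2 P)
    (hmart : Martingale (fun t ω => Real.exp (α * t) * Z t ω) ℱ P)
    (c : ℝ) (hc : 0 < c)
    (hstat : ∀ t, ∫ ω, (Z t ω) ^ 2 ∂P = c) :
    0 ≤ α :=
  correlation_index_nonneg_general ℱ α Z hL2 hmart c hc hstat
end

section
/- Let (Ω, 𝒜, P) be a probability space, X : ℝ → Ω → ℝ a stochastic process, f, g : ℝ → ℝ Borel measurable functions with f(X_t) and g(X_t) square integrable for every t, and let α, β ∈ ℝ with α ≠ β. Assume that for all s ≤ t: E[f(X_t) | σ(X_s)] = exp(-α(t-s)) f(X_s) a.s. and E[g(X_s) | σ(X_t)] = exp(-β(t-s)) g(X_t) a.s., and that there is a constant c with E[f(X_t) g(X_t)] = c for all t ∈ ℝ. Then c = 0, i.e. f(X_t) and g(X_t) are orthogonal in L²(P) for every t. -/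
/-!
Let `s < t`. Computing the cross moment `E[g(X_s) f(X_t)]` by conditioning on `X_s` gives
`exp(-α(t-s)) E[f(X_s) g(X_s)] = exp(-α(t-s)) c`, while conditioning on `X_t` gives
`exp(-β(t-s)) E[f(X_t) g(X_t)] = exp(-β(t-s)) c`.
Since `α ≠ β` the two factors differ, so `c = 0`.
-/

open MeasureTheory

theorem integral_mul_eq_const_mul_of_condExp_eq {Ω : Type*} {m m0 : MeasurableSpace Ω}
    {μ : Measure Ω} [IsFiniteMeasure μ] (hm : m ≤ m0) {h Y Z : Ω → ℝ} {r : ℝ}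
    (hh : AEStronglyMeasurable[m] h μ) (hhY : Integrable (h * Y) μ) (hY : Integrable Y μ)
    (hYZ : μ[Y|m] =ᵐ[μ] fun ω => r * Z ω) :
    ∫ ω, h ω * Y ω ∂μ = r * ∫ ω, h ω * Z ω ∂μ := by
  have pull_out : μ[h * Y|m] =ᵐ[μ] fun ω => r * (h ω * Z ω) := by
    filter_upwards [condExp_mul_of_aestronglyMeasurable_left hh hhY hY, hYZ] with ω hω hωZ
    rw [hω, Pi.mul_apply, hωZ, mul_left_comm]
  calc ∫ ω, h ω * Y ω ∂μ = ∫ ω, μ[h * Y|m] ω ∂μ := (integral_condExp hm).symm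
    _ = r * ∫ ω, h ω * Z ω ∂μ := by rw [integral_congr_ae pull_out, integral_const_mul]

theorem orthogonality_of_distinct_correlation_indices
    {Ω : Type*} {m0 : MeasurableSpace Ω} {P : Measure Ω} [IsProbabilityMeasure P]
    (X : ℝ → Ω → ℝ) (hX : ∀ t, Measurable (X t))
    (f g : ℝ → ℝ) (hf : Measurable f) (hg : Measurable g)
    (hfL2 : ∀ t, MemLp (fun ω => f (X t ω)) 2 P)
    (hgL2 : ∀ t, MemLp (fun ω => g (X t ω)) 2 P)
    (α β : ℝ) (hαβ : α ≠ β)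
    (hfwd : ∀ s t : ℝ, s ≤ t →
      P[(fun ω => f (X t ω)) | MeasurableSpace.comap (X s) (borel ℝ)]
        =ᵐ[P] fun ω => Real.exp (-α * (t - s)) * f (X s ω))
    (hbwd : ∀ s t : ℝ, s ≤ t →
      P[(fun ω => g (X s ω)) | MeasurableSpace.comap (X t) (borel ℝ)]
        =ᵐ[P] fun ω => Real.exp (-β * (t - s)) * g (X t ω))
    (c : ℝ) (hstat : ∀ t : ℝ, ∫ ω, f (X t ω) * g (X t ω) ∂P = c) :
    c = 0 := by
  have by_past : ∫ ω, g (X 0 ω) * f (X 1 ω) ∂P = Real.exp (-α * (1 - 0)) * c := by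
    rw [integral_mul_eq_const_mul_of_condExp_eq (h := fun ω => g (X 0 ω)) (hX 0).comap_le
      (hg.comp (comap_measurable (X 0))).aestronglyMeasurable
      ((hgL2 0).integrable_mul (hfL2 1)) ((hfL2 1).integrable one_le_two) (hfwd 0 1 zero_le_one),
      ← hstat 0]
    simp_rw [mul_comm (g _)]
  have by_future : ∫ ω, f (X 1 ω) * g (X 0 ω) ∂P = Real.exp (-β * (1 - 0)) * c := by
    rw [integral_mul_eq_const_mul_of_condExp_eq (h := fun ω => f (X 1 ω)) (hX 1).comap_le
      (hf.comp (comap_measurable (X 1))).aestronglyMeasurable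
      ((hfL2 1).integrable_mul (hgL2 0)) ((hgL2 0).integrable one_le_two) (hbwd 0 1 zero_le_one),
      hstat 1]
  have same_moment : Real.exp (-α * (1 - 0)) * c = Real.exp (-β * (1 - 0)) * c := by
    simp_rw [← by_past, ← by_future, mul_comm (g _)]
  have factors_differ : Real.exp (-α * (1 - 0)) ≠ Real.exp (-β * (1 - 0)) := by
    simpa using hαβ
  exact (mul_eq_mul_right_iff.mp same_moment).resolve_left factors_differ
end

section
/- For every λ > 0 and f ∈ H, the H-valued function t ↦ exp(-λ t) • U_t f is Bochner integrable on [0, ∞), its integral R_λ f := ∫₀^∞ exp(-λ t) • U_t f dt is the unique element of H whose n-th coordinate with respect to e equals c_n / (λ + α n) (where c_n is the n-th coordinate of f), and ‖R_λ f‖ ≤ ‖f‖ / λ. -/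
/-!
Since its multipliers lie in `[0, 1]`, each `U t` is a contraction, so the integrand is dominated
by `exp (-λ t) ‖f‖`; this gives integrability and the bound `‖f‖ / λ`. Integration commutes
with taking coordinates, and the `n`-th coordinate of the integrand is
`exp (-(λ + α n) t) c_n`, whose integral over `(0, ∞)` is `c_n / (λ + α n)`.
-/

open MeasureTheory Set Real

namespace HilbertBasis

variable {ι 𝕜 E : Type*} [RCLike 𝕜] [NormedAddCommGroup E] [InnerProductSpace 𝕜 E]

theorem norm_le_of_forall_norm_repr_le (b : HilbertBasis ι 𝕜 E) {x y : E}
    (h : ∀ i, ‖b.repr y i‖ ≤ ‖b.repr x i‖) : ‖y‖ ≤ ‖x‖ := by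
  rw [← b.repr.norm_map y, ← b.repr.norm_map x]
  have h2 : (0 : ℝ) < (2 : ENNReal).toReal := by norm_num
  refine lp.norm_le_of_forall_sum_le h2 (norm_nonneg _) fun s => ?_
  calc ∑ i ∈ s, ‖b.repr y i‖ ^ (2 : ENNReal).toReal
      ≤ ∑ i ∈ s, ‖b.repr x i‖ ^ (2 : ENNReal).toReal :=
        Finset.sum_le_sum fun i _ => rpow_le_rpow (norm_nonneg _) (h i) h2.le
    _ ≤ ‖b.repr x‖ ^ (2 : ENNReal).toReal := lp.sum_rpow_le_norm_rpow h2 (b.repr x) s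

/-- Strong measurability can be tested coordinatewise: `g` is the pointwise limit of the partial
sums of its Fourier series. -/
theorem aestronglyMeasurable_of_repr {X : Type*} [MeasurableSpace X] {μ : Measure X}
    (b : HilbertBasis ℕ 𝕜 E) {g : X → E}
    (h : ∀ n, AEStronglyMeasurable (fun x => b.repr (g x) n) μ) :
    AEStronglyMeasurable g μ :=
  aestronglyMeasurable_of_tendsto_ae Filter.atTop
    (f := fun N x => ∑ n ∈ Finset.range N, b.repr (g x) n • b n)
    (fun _ => Finset.aestronglyMeasurable_fun_sum _ fun n _ =>
      (h n).smul aestronglyMeasurable_const)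
    (.of_forall fun x => (b.hasSum_repr (g x)).tendsto_sum_nat)

theorem repr_integral [CompleteSpace E] [NormedSpace ℝ E] {X : Type*} [MeasurableSpace X]
    {μ : Measure X} (b : HilbertBasis ι 𝕜 E) {g : X → E} (hg : Integrable g μ) (i : ι) :
    b.repr (∫ x, g x ∂μ) i = ∫ x, b.repr (g x) i ∂μ := by
  simp_rw [b.repr_apply_apply]
  exact (integral_inner hg _).symm

end HilbertBasis

theorem integral_exp_neg_mul_Ioi_zero {l : ℝ} (hl : 0 < l) :
    ∫ t in Ioi (0 : ℝ), exp (-l * t) = 1 / l := by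
  rw [integral_exp_mul_Ioi (neg_neg_of_pos hl) 0]
  simp

section Laplace

variable {E : Type*} [NormedAddCommGroup E] [NormedSpace ℝ E] {g : ℝ → E} {C l : ℝ}

theorem norm_exp_neg_mul_smul_le (hC : ∀ t > 0, ‖g t‖ ≤ C) :
    ∀ᵐ t ∂volume.restrict (Ioi 0), ‖exp (-l * t) • g t‖ ≤ exp (-l * t) * C := by
  refine (ae_restrict_iff' measurableSet_Ioi).2 (.of_forall fun t ht => ?_)
  rw [norm_smul, norm_of_nonneg (exp_pos _).le]
  exact mul_le_mul_of_nonneg_left (hC t ht) (exp_pos _).le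

theorem integrableOn_exp_neg_mul_smul_Ioi (hl : 0 < l)
    (hg : AEStronglyMeasurable g (volume.restrict (Ioi 0))) (hC : ∀ t > 0, ‖g t‖ ≤ C) :
    IntegrableOn (fun t => exp (-l * t) • g t) (Ioi 0) :=
  ((exp_neg_integrableOn_Ioi 0 hl).mul_const C).mono'
    ((continuous_exp.comp (continuous_const.mul continuous_id)).aestronglyMeasurable.smul hg)
    (norm_exp_neg_mul_smul_le hC)

theorem norm_integral_exp_neg_mul_smul_Ioi_le (hl : 0 < l) (hC : ∀ t > 0, ‖g t‖ ≤ C) :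
    ‖∫ t in Ioi 0, exp (-l * t) • g t‖ ≤ C / l := by
  have h := norm_integral_le_of_norm_le ((exp_neg_integrableOn_Ioi 0 hl).mul_const C)
    (norm_exp_neg_mul_smul_le hC)
  rwa [integral_mul_const, integral_exp_neg_mul_Ioi_zero hl, one_div_mul_eq_div] at h

end Laplace

theorem resolvent_of_transition_semigroup
    {H : Type*} [NormedAddCommGroup H] [InnerProductSpace ℝ H] [CompleteSpace H]
    (e : HilbertBasis ℕ ℝ H) (α : ℕ → ℝ) (hα : ∀ n, 0 ≤ α n)
    (U : ℝ → H → H)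
    (hU : ∀ t : ℝ, 0 ≤ t → ∀ (f : H) (n : ℕ),
      e.repr (U t f) n = Real.exp (-(α n) * t) * e.repr f n)
    (l : ℝ) (hl : 0 < l) (f : H) :
    IntegrableOn (fun t : ℝ => Real.exp (-l * t) • U t f) (Set.Ioi 0) volume ∧
    (∀ n : ℕ,
      e.repr (∫ t in Set.Ioi (0 : ℝ), Real.exp (-l * t) • U t f) n
        = e.repr f n / (l + α n)) ∧
    ‖∫ t in Set.Ioi (0 : ℝ), Real.exp (-l * t) • U t f‖ ≤ ‖f‖ / l := by
  have hbound : ∀ t > 0, ‖U t f‖ ≤ ‖f‖ := fun t ht =>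
    e.norm_le_of_forall_norm_repr_le fun n => by
      rw [hU t ht.le f n, norm_mul, norm_of_nonneg (exp_pos _).le]
      exact mul_le_of_le_one_left (norm_nonneg _)
        (exp_le_one_iff.2 (by nlinarith [hα n]))
  have hmeas : AEStronglyMeasurable (fun t => U t f) (volume.restrict (Ioi 0)) :=
    e.aestronglyMeasurable_of_repr fun n =>
      (by fun_prop : Continuous fun t => exp (-(α n) * t) * e.repr f n).aestronglyMeasurable.congr
        ((ae_restrict_iff' measurableSet_Ioi).2
          (.of_forall fun t ht => (hU t (le_of_lt ht) f n).symm))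
  have hint := integrableOn_exp_neg_mul_smul_Ioi hl hmeas hbound
  refine ⟨hint, fun n => ?_, norm_integral_exp_neg_mul_smul_Ioi_le hl hbound⟩
  have hln : 0 < l + α n := by linarith [hα n]
  rw [e.repr_integral hint, div_eq_mul_one_div, mul_comm, ← integral_exp_neg_mul_Ioi_zero hln,
    ← integral_mul_const]
  refine setIntegral_congr_fun measurableSet_Ioi fun t ht => ?_
  simp only [map_smul, lp.coeFn_smul, Pi.smul_apply, smul_eq_mul, hU t (le_of_lt ht) f n]
  rw [neg_add, add_mul, exp_add]
  ring
end

section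
/- Let f ∈ H have coordinates c_n with respect to e and suppose ∑'_{n} (α n)² (c_n)² < ∞. Let g ∈ H be the unique element whose n-th coordinate equals -(α n) c_n. Then (1/t) • (U_t f - f) tends to g in H as t → 0⁺. In other words, the operator A f = -∑ α_n c_n e_n is the infinitesimal generator of the semigroup (U_t) on the domain D_A = {f : ∑ (α n)² (c_n)² < ∞}. -/
/-!
In coordinates, `(1 / t) • (U t f - f) - g` has entries `((exp (-α n * t) - 1) / t + α n) * c n`,
where `c n = e.repr f n`.
Each entry tends to `0` (the derivative of `exp (-α n * t)` at `0` is `-α n`), and since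
`1 - α n * t ≤ exp (-α n * t) ≤ 1` its square is at most `α n ^ 2 * c n ^ 2`, which is summable.
Parseval's identity and dominated convergence for series then give convergence in norm.
-/

open Filter Topology

namespace Real

theorem tendsto_exp_mul_sub_one_div (a : ℝ) :
    Tendsto (fun t => (exp (a * t) - 1) / t) (𝓝[≠] 0) (𝓝 a) := by
  have h : HasDerivAt (fun t => exp (a * t)) a 0 := by
    simpa using ((hasDerivAt_id (0 : ℝ)).const_mul a).exp
  simpa [div_eq_inv_mul] using h.tendsto_slope_zero

theorem sq_exp_neg_mul_sub_one_div_add_le {a t : ℝ} (ha : 0 ≤ a) (ht : 0 < t) :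
    ((exp (-a * t) - 1) / t + a) ^ 2 ≤ a ^ 2 := by
  have hlower : -a ≤ (exp (-a * t) - 1) / t := by
    rw [le_div_iff₀ ht]
    linarith [add_one_le_exp (-a * t)]
  have hupper : (exp (-a * t) - 1) / t ≤ 0 :=
    div_nonpos_of_nonpos_of_nonneg (sub_nonpos.mpr (exp_le_one_iff.mpr (by nlinarith))) ht.le
  nlinarith

end Real

namespace HilbertBasis

variable {ι 𝕜 E : Type*} [RCLike 𝕜] [NormedAddCommGroup E] [InnerProductSpace 𝕜 E]

theorem norm_sq_eq_tsum_norm_repr_sq (b : HilbertBasis ι 𝕜 E) (x : E) :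
    ‖x‖ ^ 2 = ∑' i, ‖b.repr x i‖ ^ 2 := by
  rw [← b.repr.norm_map x]
  exact_mod_cast lp.norm_rpow_eq_tsum (p := 2) (by norm_num) (b.repr x)

theorem tendsto_of_tendsto_repr_of_dominated {α : Type*} (b : HilbertBasis ι 𝕜 E)
    {l : Filter α} {F : α → E} {x : E} {bound : ι → ℝ} (h_sum : Summable bound)
    (h_lim : ∀ i, Tendsto (fun a => b.repr (F a) i) l (𝓝 (b.repr x i)))
    (h_bound : ∀ᶠ a in l, ∀ i, ‖b.repr (F a - x) i‖ ^ 2 ≤ bound i) :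
    Tendsto F l (𝓝 x) := by
  rw [tendsto_iff_norm_sub_tendsto_zero]
  have h_coord (i : ι) : Tendsto (fun a => ‖b.repr (F a - x) i‖ ^ 2) l (𝓝 0) := by
    simp only [map_sub, lp.coeFn_sub, Pi.sub_apply]
    simpa using ((tendsto_sub_nhds_zero_iff.mpr (h_lim i)).norm.pow 2)
  have h_sq : Tendsto (fun a => ‖F a - x‖ ^ 2) l (𝓝 0) := by
    simp only [b.norm_sq_eq_tsum_norm_repr_sq]
    simpa using tendsto_tsum_of_dominated_convergence h_sum h_coord
      (h_bound.mono fun a ha i => by simpa using ha i)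
  simpa [Real.sqrt_sq (norm_nonneg _)] using h_sq.sqrt

end HilbertBasis

theorem infinitesimal_generator_of_transition_semigroup
    {H : Type*} [NormedAddCommGroup H] [InnerProductSpace ℝ H]
    (e : HilbertBasis ℕ ℝ H) (α : ℕ → ℝ) (hα : ∀ n, 0 ≤ α n)
    (U : ℝ → H → H)
    (hU : ∀ t : ℝ, 0 ≤ t → ∀ (f : H) (n : ℕ),
      e.repr (U t f) n = Real.exp (-(α n) * t) * e.repr f n)
    (f : H) (hf : Summable (fun n => (α n) ^ 2 * (e.repr f n) ^ 2))
    (g : H) (hg : ∀ n, e.repr g n = -(α n) * e.repr f n) :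
    Filter.Tendsto (fun t : ℝ => (1 / t) • (U t f - f))
      (nhdsWithin 0 (Set.Ioi 0)) (nhds g) := by
  have h_coord : ∀ t > 0, ∀ n, e.repr ((1 / t) • (U t f - f)) n =
      (Real.exp (-α n * t) - 1) / t * e.repr f n := by
    intro t ht n
    simp only [map_smul, map_sub, lp.coeFn_smul, lp.coeFn_sub, Pi.smul_apply, Pi.sub_apply,
      hU t ht.le, smul_eq_mul]
    ring
  refine e.tendsto_of_tendsto_repr_of_dominated hf (fun n => ?_) ?_
  · rw [hg]
    refine Tendsto.congr' (eventually_nhdsWithin_of_forall fun t ht => (h_coord t ht n).symm) ?_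
    exact ((Real.tendsto_exp_mul_sub_one_div (-α n)).mono_left (nhdsGT_le_nhdsNE 0)).mul_const _
  · filter_upwards [self_mem_nhdsWithin] with t ht n
    rw [map_sub, lp.coeFn_sub, Pi.sub_apply, h_coord t ht, hg, Real.norm_eq_abs, sq_abs]
    calc _ = ((Real.exp (-α n * t) - 1) / t + α n) ^ 2 * e.repr f n ^ 2 := by ring
      _ ≤ α n ^ 2 * e.repr f n ^ 2 :=
        mul_le_mul_of_nonneg_right (Real.sq_exp_neg_mul_sub_one_div_add_le (hα n) ht)
          (sq_nonneg _)
end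

section
/- Let γ > 0 and let a, b ≥ 0 be real numbers. If for every τ > 0 the identity exp(-τ(a+b)) + exp(-τ(a+b+2γ)) = exp(-τ(γ+2a)) + exp(-τ(γ+2b)) holds, then |a - b| = γ. (Applied with a = α_{n-1}, b = α_n and γ = α₁, this is the step showing that a regular stationary Markov process with polynomial regression is a harness only if α_n = n α₁ for all n.) -/
/-!
At `τ = 1`, in the variables `u = e^{-γ}`, `p = e^{-a}`, `q = e^{-b}`, the identity
reads `pq + u²pq = up² + uq²`, which factors as `(up - q)(p - uq) = 0`; taking logarithms of either
factor gives `b - a = γ` or `a - b = γ`.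
-/

open Real

theorem mul_add_sq_mul_eq_iff {R : Type*} [CommRing R] [NoZeroDivisors R] {u p q : R} :
    p * q + u ^ 2 * (p * q) = u * p ^ 2 + u * q ^ 2 ↔ u * p = q ∨ p = u * q := by
  rw [← sub_eq_zero, ← sub_eq_zero (a := u * p), ← sub_eq_zero (a := p), ← mul_eq_zero]
  constructor <;> intro h <;> linear_combination -h

theorem sub_eq_or_sub_eq_neg_of_exp_add_exp_eq {x y z : ℝ}
    (h : exp (-(x + y)) + exp (-(x + y + 2 * z)) = exp (-(z + 2 * x)) + exp (-(z + 2 * y))) :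
    x - y = z ∨ x - y = -z := by
  have key : exp (-x) * exp (-y) + exp (-z) ^ 2 * (exp (-x) * exp (-y)) =
      exp (-z) * exp (-x) ^ 2 + exp (-z) * exp (-y) ^ 2 := by
    rw [show -(x + y) = -x + -y by ring, show -(x + y + 2 * z) = -x + -y + (-z + -z) by ring,
      show -(z + 2 * x) = -z + (-x + -x) by ring, show -(z + 2 * y) = -z + (-y + -y) by ring] at h
    simp only [exp_add] at h
    linear_combination h
  rcases mul_add_sq_mul_eq_iff.mp key with h | h
  · rw [← exp_add, exp_eq_exp] at h
    right; linarith
  · rw [← exp_add, exp_eq_exp] at h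
    left; linarith

theorem harness_exponential_identity_forces_spacing_general
    (γ a b : ℝ) (hγ : 0 < γ)
    (hid : ∀ τ : ℝ, 0 < τ →
      Real.exp (-τ * (a + b)) + Real.exp (-τ * (a + b + 2 * γ)) =
        Real.exp (-τ * (γ + 2 * a)) + Real.exp (-τ * (γ + 2 * b))) :
    |a - b| = γ := by
  rw [abs_eq hγ.le]
  exact sub_eq_or_sub_eq_neg_of_exp_add_exp_eq (by simpa only [neg_mul, one_mul] using hid 1 one_pos)

theorem harness_exponential_identity_forces_spacing
    (γ a b : ℝ) (hγ : 0 < γ) (ha : 0 ≤ a) (hb : 0 ≤ b)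
    (hid : ∀ τ : ℝ, 0 < τ →
      Real.exp (-τ * (a + b)) + Real.exp (-τ * (a + b + 2 * γ)) =
        Real.exp (-τ * (γ + 2 * a)) + Real.exp (-τ * (γ + 2 * b))) :
    |a - b| = γ :=
  harness_exponential_identity_forces_spacing_general γ a b hγ hid
end

section
/- Let α > 0, let s < t < u be real numbers, and define a_L = exp(-α(u-s)) (exp(α(u-t)) - exp(-α(u-t))) / (1 - exp(-2α(u-s))) and a_R = exp(-α(u-s)) (exp(α(t-s)) - exp(-α(t-s))) / (1 - exp(-2α(u-s))). Then for every natural number n ≥ 1, exp(-(n-1)α(t-s) - nα(u-t)) = a_L · exp(-nα(u-s)) + a_R · exp(-(n-1)α(u-s)). (This identity shows that if the correlation indices satisfy α_n = n α₁, then the harness condition holds for every n, i.e. the 'if' direction of the characterization of harnesses among regular stationary Markov processes with polynomial regression.) -/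
/-!
With `a = α (t - s)` and `b = α (u - t)`, the coefficients are `a_L = sinh b / sinh (a + b)` and
`a_R = sinh a / sinh (a + b)`. The identity for `n` is the identity for `n = 1` multiplied by
`exp (-(n - 1) (a + b))`, and the latter, cleared of the denominator `sinh (a + b)`, reads
`sinh (a + b) e^{-b} = sinh a + sinh b e^{-(a + b)}`.
-/

open Real

lemma Real.exp_neg_mul_sub_div_one_sub_exp (b c : ℝ) :
    exp (-c) * (exp b - exp (-b)) / (1 - exp (-(2 * c))) = sinh b / sinh c := by
  have hden : 1 - exp (-(2 * c)) = 2 * exp (-c) * sinh c := by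
    rw [sinh_eq, show -(2 * c) = -c + -c by ring, exp_add, exp_neg]
    field_simp
  rw [hden, sinh_eq b]
  field_simp

lemma Real.sinh_add_mul_exp_neg (a b : ℝ) :
    sinh (a + b) * exp (-b) = sinh a + sinh b * exp (-(a + b)) := by
  simp only [sinh_eq, sub_div, sub_mul, div_mul_eq_mul_div, ← exp_add]
  ring_nf

lemma Real.exp_neg_mul_sub_eq_sinh_div_sinh_add (a b m : ℝ) (hab : a + b ≠ 0) :
    exp (-m * a - (m + 1) * b) =
      sinh b / sinh (a + b) * exp (-(m + 1) * (a + b)) + sinh a / sinh (a + b) * exp (-m * (a + b)) := by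
  have hsinh : sinh (a + b) ≠ 0 := sinh_ne_zero.mpr hab
  rw [div_mul_eq_mul_div, div_mul_eq_mul_div, ← add_div, eq_div_iff hsinh]
  have hsplit : ∀ x, exp (-m * (a + b) + x) = exp (-m * (a + b)) * exp x := fun x => exp_add _ _
  calc exp (-m * a - (m + 1) * b) * sinh (a + b)
      = exp (-m * (a + b) + -b) * sinh (a + b) := by congr 2; ring
    _ = exp (-m * (a + b)) * (sinh (a + b) * exp (-b)) := by rw [hsplit]; ring
    _ = exp (-m * (a + b)) * sinh a + sinh b * exp (-m * (a + b) + -(a + b)) := by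
        rw [sinh_add_mul_exp_neg, hsplit]; ring
    _ = _ := by rw [show -m * (a + b) + -(a + b) = -(m + 1) * (a + b) by ring]; ring

theorem harness_condition_holds_for_all_n_general
    (α s t u : ℝ) (hα : 0 < α) (hst : s < t) (htu : t < u) (n : ℕ) :
    Real.exp (-((n : ℝ) - 1) * α * (t - s) - (n : ℝ) * α * (u - t)) =
      Real.exp (-α * (u - s)) * (Real.exp (α * (u - t)) - Real.exp (-α * (u - t))) /
          (1 - Real.exp (-2 * α * (u - s))) * Real.exp (-(n : ℝ) * α * (u - s)) +
      Real.exp (-α * (u - s)) * (Real.exp (α * (t - s)) - Real.exp (-α * (t - s))) /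
          (1 - Real.exp (-2 * α * (u - s))) * Real.exp (-((n : ℝ) - 1) * α * (u - s)) := by
  have hsum : α * (t - s) + α * (u - t) = α * (u - s) := by ring
  have hab : α * (t - s) + α * (u - t) ≠ 0 := by
    rw [hsum]; exact (mul_pos hα (by linarith)).ne'
  have key := exp_neg_mul_sub_eq_sinh_div_sinh_add (α * (t - s)) (α * (u - t)) ((n : ℝ) - 1) hab
  simp only [hsum, sub_add_cancel] at key
  simp only [neg_mul, mul_assoc, exp_neg_mul_sub_div_one_sub_exp]
  convert key using 2 <;> ring_nf

theorem harness_condition_holds_for_all_n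
    (α s t u : ℝ) (hα : 0 < α) (hst : s < t) (htu : t < u) (n : ℕ) (hn : 1 ≤ n) :
    Real.exp (-((n : ℝ) - 1) * α * (t - s) - (n : ℝ) * α * (u - t)) =
      Real.exp (-α * (u - s)) * (Real.exp (α * (u - t)) - Real.exp (-α * (u - t))) /
          (1 - Real.exp (-2 * α * (u - s))) * Real.exp (-(n : ℝ) * α * (u - s)) +
      Real.exp (-α * (u - s)) * (Real.exp (α * (t - s)) - Real.exp (-α * (t - s))) /
          (1 - Real.exp (-2 * α * (u - s))) * Real.exp (-((n : ℝ) - 1) * α * (u - s)) :=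
  harness_condition_holds_for_all_n_general α s t u hα hst htu n
end

section
/- Let m, d : ℕ → ℝ satisfy m 0 = 1, d 0 = 1, and for every j ≥ 1: j · m j + ∑_{k=0}^{j-1} (j choose k) · d (j-k) · m k = 0. Define the formal power series φ = ∑_{j≥0} (m j / j!) X^j and D = ∑_{j≥0} (d j / j!) X^j in ℝ⟦X⟧. Then X · φ' = φ · (1 - D), where φ' denotes the formal derivative of φ. -/
/-! Compare coefficients of `X ^ n / n!`: `X * d/dX` multiplies the `n`-th coefficient by `n`, and
the product of two exponential generating functions has the binomial convolution as coefficients.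
The identity is then the recursion with its missing `k = n` term, `m n * d 0 = m n`, added on both
sides. -/

open PowerSeries Finset Nat

theorem coeff_X_mul_derivative {R : Type*} [CommSemiring R] (f : R⟦X⟧) (n : ℕ) :
    coeff n (X * d⁄dX R f) = n * coeff n f := by
  rcases n with _ | n
  · simp
  · rw [coeff_succ_X_mul, coeff_derivative, mul_comm]
    push_cast
    rfl

theorem coeff_mk_div_factorial_mul {K : Type*} [Field K] [CharZero K] (a b : ℕ → K) (n : ℕ) :
    coeff n (mk (fun j => a j / j !) * mk fun j => b j / j !) =
      (∑ k ∈ range (n + 1), n.choose k * a k * b (n - k)) / n ! := by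
  rw [coeff_mul, Nat.sum_antidiagonal_eq_sum_range_succ_mk, sum_div]
  refine sum_congr rfl fun k hk => ?_
  have hkn : k ≤ n := Nat.lt_succ_iff.mp (mem_range.mp hk)
  have hn : (n ! : K) ≠ 0 := cast_ne_zero.mpr n.factorial_ne_zero
  rw [coeff_mk, coeff_mk, cast_choose K hkn]
  field_simp

theorem moment_generating_function_ode_general
    (m d : ℕ → ℝ) (hd0 : d 0 = 1)
    (hrec : ∀ j : ℕ, 1 ≤ j →
      (j : ℝ) * m j + ∑ k ∈ Finset.range j, (j.choose k : ℝ) * d (j - k) * m k = 0) :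
    PowerSeries.X * (d⁄dX ℝ) (PowerSeries.mk fun j => m j / (j.factorial : ℝ)) =
      (PowerSeries.mk fun j => m j / (j.factorial : ℝ)) *
        (1 - PowerSeries.mk fun j => d j / (j.factorial : ℝ)) := by
  have hconv (n : ℕ) :
      n * m n = m n - ∑ k ∈ range (n + 1), n.choose k * m k * d (n - k) := by
    rw [sum_range_succ, Nat.choose_self, Nat.sub_self, hd0]
    rcases n with _ | n
    · simp
    · have h := hrec (n + 1) (Nat.succ_pos n)
      simp only [mul_right_comm _ (d _)] at h
      push_cast at h ⊢
      linarith
  ext n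
  rw [mul_one_sub, map_sub, coeff_X_mul_derivative, coeff_mk_div_factorial_mul, coeff_mk,
    ← sub_div, ← hconv]
  ring

theorem moment_generating_function_ode
    (m d : ℕ → ℝ) (hm0 : m 0 = 1) (hd0 : d 0 = 1)
    (hrec : ∀ j : ℕ, 1 ≤ j →
      (j : ℝ) * m j + ∑ k ∈ Finset.range j, (j.choose k : ℝ) * d (j - k) * m k = 0) :
    PowerSeries.X * (d⁄dX ℝ) (PowerSeries.mk fun j => m j / (j.factorial : ℝ)) =
      (PowerSeries.mk fun j => m j / (j.factorial : ℝ)) *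
        (1 - PowerSeries.mk fun j => d j / (j.factorial : ℝ)) :=
  moment_generating_function_ode_general m d hd0 hrec
end

section
/- Let D ∈ ℝ⟦X⟧ be a formal power series with constant coefficient 1. Then there exists a unique formal power series φ ∈ ℝ⟦X⟧ with constant coefficient 1 satisfying X · φ' = φ · (1 - D), where φ' denotes the formal derivative of φ. -/
/-!
Since `1 - D` has no constant term, it equals `X * G`, and cancelling `X` turns the equation into
the linear equation `φ' = φ * G`. This is solved by `exp (∫ G)`, where `∫ G` is the formal
antiderivative without constant term; any other solution `ψ` with `ψ(0) = 1` satisfies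
`(ψ / φ)' = 0`, hence `ψ = φ`.
-/

open PowerSeries

namespace PowerSeries

variable {K : Type*} [Field K]

noncomputable def integral (f : K⟦X⟧) : K⟦X⟧ :=
  mk fun
    | 0 => 0
    | n + 1 => coeff n f / (n + 1)

@[simp]
theorem constantCoeff_integral (f : K⟦X⟧) : constantCoeff (integral f) = 0 := by
  rw [← coeff_zero_eq_constantCoeff_apply, integral, coeff_mk]

@[simp]
theorem derivative_integral [CharZero K] (f : K⟦X⟧) : d⁄dX K (integral f) = f := by
  ext n
  rw [coeff_derivative, integral, coeff_mk]
  field_simp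

theorem constantCoeff_subst_of_constantCoeff_eq_zero {R : Type*} [CommRing R] {f g : R⟦X⟧}
    (hg : constantCoeff g = 0) : constantCoeff (f.subst g) = constantCoeff f := by
  rw [← coeff_zero_eq_constantCoeff_apply, coeff_subst' (HasSubst.of_constantCoeff_zero' hg),
    finsum_eq_single _ 0]
  · simp
  · intro d hd
    simp [hg, zero_pow hd]

theorem derivative_exp_subst [CharZero K] {g : K⟦X⟧} (hg : constantCoeff g = 0) :
    d⁄dX K ((exp K).subst g) = (exp K).subst g * d⁄dX K g := by
  rw [derivative_subst (HasSubst.of_constantCoeff_zero' hg), derivative_exp]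

theorem eq_of_derivative_eq_mul [CharZero K] {φ ψ G : K⟦X⟧} (hψ0 : constantCoeff ψ ≠ 0)
    (h0 : constantCoeff φ = constantCoeff ψ) (hφ : d⁄dX K φ = φ * G)
    (hψ : d⁄dX K ψ = ψ * G) : φ = ψ := by
  have hψinv : ψ * ψ⁻¹ = 1 := PowerSeries.mul_inv_cancel ψ hψ0
  have hquot : φ * ψ⁻¹ = 1 := by
    refine derivative.ext ?_ ?_
    · rw [Derivation.leibniz, derivative_inv', hφ, hψ, derivative_one, smul_eq_mul, smul_eq_mul]
      linear_combination (-(φ * ψ⁻¹ * G)) * hψinv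
    · rw [map_mul, constantCoeff_inv, h0, mul_inv_cancel₀ hψ0, map_one]
  rw [← one_mul ψ, ← (eq_mul_inv_iff_mul_eq hψ0).mp hquot.symm]

theorem existsUnique_derivative_eq_mul [CharZero K] (G : K⟦X⟧) :
    ∃! φ : K⟦X⟧, constantCoeff φ = 1 ∧ d⁄dX K φ = φ * G := by
  have hG : constantCoeff (integral G) = 0 := constantCoeff_integral G
  have hψ0 : constantCoeff ((exp K).subst (integral G)) = 1 := by
    rw [constantCoeff_subst_of_constantCoeff_eq_zero hG, constantCoeff_exp]
  refine ⟨(exp K).subst (integral G), ⟨hψ0, ?_⟩, ?_⟩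
  · rw [derivative_exp_subst hG, derivative_integral]
  rintro φ ⟨hφ0, hφ⟩
  exact eq_of_derivative_eq_mul (by simp [hψ0]) (by rw [hφ0, hψ0]) hφ
    (by rw [derivative_exp_subst hG, derivative_integral])

end PowerSeries

theorem mgf_ode_unique_solution
    (D : PowerSeries ℝ) (hD : PowerSeries.constantCoeff D = 1) :
    ∃! φ : PowerSeries ℝ, PowerSeries.constantCoeff φ = 1 ∧
      PowerSeries.X * (d⁄dX ℝ) φ = φ * (1 - D) := by
  obtain ⟨G, hG⟩ : X ∣ 1 - D := X_dvd_iff.mpr (by rw [map_sub, map_one, hD, sub_self])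
  refine (existsUnique_congr fun φ => and_congr_right fun _ => ?_).mpr
    (existsUnique_derivative_eq_mul G)
  rw [hG, mul_left_comm]
  exact mul_right_inj' X_ne_zero
end

section
/- For every ρ ∈ (-1, 1) and all real x, y, the series ∑_{n=0}^∞ ρⁿ Hₙ(x) Hₙ(y) / n! converges and equals (1/√(1-ρ²)) · exp( -(x - ρ y)² / (2(1-ρ²)) + x²/2 ), where Hₙ denotes the n-th probabilists' Hermite polynomial. (This is the Poisson–Mehler formula, identified in the paper as the expansion dη/dμ(x|y,t) = ∑ₙ exp(-αₙ t) hₙ(x) hₙ(y) for the Ornstein–Uhlenbeck process, with ρ = exp(-α t).) -/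
/-!
Hermite polynomials are Gaussian moments: `√(2π) Hₙ(x) = ∫ (x + i t)ⁿ e^{-t²/2} dt`, as both sides
satisfy the three-term recurrence (Gaussian integration by parts). Hence
`2π ρⁿ Hₙ(x) Hₙ(y) = ∬ wⁿ e^{-(u² + v²)/2} du dv` with `w = ρ (x + i u) (y + i v)`. For `|ρ| < 1`
the function `e^{|w|} e^{-(u² + v²)/2}` is integrable, because `|w| ≤ |ρ| (x² + u² + y² + v²) / 2`,
so the series `∑ wⁿ / n!` may be integrated termwise; this leaves the Gaussian integral of `e^w`,
evaluated by completing the square in `v` and then in `u`.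
-/

open Polynomial Complex MeasureTheory Real

theorem Complex.ofReal_cpow_one_half {a : ℝ} (ha : 0 ≤ a) : (a : ℂ) ^ (1 / 2 : ℂ) = √a := by
  rw [Real.sqrt_eq_rpow, ofReal_cpow ha]
  norm_num

namespace Polynomial

theorem derivative_hermite_succ (n : ℕ) :
    derivative (hermite (n + 1)) = (n + 1 : ℤ[X]) * hermite n := by
  induction n with
  | zero => simp
  | succ n ih =>
    rw [hermite_succ (n + 1), derivative_sub, derivative_mul, derivative_X, ih, derivative_mul,
      hermite_succ n]
    simp only [derivative_add, derivative_natCast, derivative_one]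
    push_cast
    ring

theorem hermite_succ_succ (n : ℕ) :
    hermite (n + 2) = X * hermite (n + 1) - (n + 1 : ℤ[X]) * hermite n := by
  rw [hermite_succ (n + 1), derivative_hermite_succ]

end Polynomial

theorem integrable_eval_mul_gaussian (P : ℂ[X]) :
    Integrable fun t : ℝ => P.eval (t : ℂ) * cexp (-(t : ℂ) ^ 2 / 2) := by
  induction P using Polynomial.induction_on' with
  | add p q hp hq => simp only [eval_add, add_mul]; exact hp.add hq
  | monomial k a =>
    have h : Integrable fun t : ℝ => ((t ^ (k : ℝ) * Real.exp (-(1 / 2) * t ^ 2) : ℝ) : ℂ) :=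
      (integrable_rpow_mul_exp_neg_mul_sq (by norm_num)
        (by linarith [k.cast_nonneg (α := ℝ)])).ofReal
    refine (h.const_mul a).congr (.of_forall fun t => ?_)
    push_cast [Real.rpow_natCast, eval_monomial, Complex.ofReal_exp]
    ring_nf

theorem integral_mul_eval_mul_gaussian (P : ℂ[X]) :
    ∫ t : ℝ, t * P.eval (t : ℂ) * cexp (-(t : ℂ) ^ 2 / 2) =
      ∫ t : ℝ, P.derivative.eval (t : ℂ) * cexp (-(t : ℂ) ^ 2 / 2) := by
  have hP (t : ℝ) : HasDerivAt (fun t : ℝ => P.eval (t : ℂ)) (P.derivative.eval (t : ℂ)) t :=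
    (P.hasDerivAt (t : ℂ)).comp_ofReal
  have hγ (t : ℝ) : HasDerivAt (fun t : ℝ => -cexp (-(t : ℂ) ^ 2 / 2))
      (t * cexp (-(t : ℂ) ^ 2 / 2)) t := by
    have h : HasDerivAt (fun z : ℂ => -z ^ 2 / 2) (-(t : ℂ)) t := by
      refine ((hasDerivAt_pow 2 (t : ℂ)).neg.div_const 2).congr_deriv ?_
      push_cast
      ring
    exact (h.cexp.fun_neg.congr_deriv (by ring)).comp_ofReal
  have hibp := integral_mul_deriv_eq_deriv_mul_of_integrable (fun t _ => hP t) (fun t _ => hγ t)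
    ((integrable_eval_mul_gaussian (X * P)).congr
      (.of_forall fun t => by simp only [eval_mul, eval_X, Pi.mul_apply]; ring))
    ((integrable_eval_mul_gaussian (-P.derivative)).congr (.of_forall fun t => by simp))
    ((integrable_eval_mul_gaussian (-P)).congr (.of_forall fun t => by simp))
  simp only [mul_neg, integral_neg, neg_neg] at hibp
  rw [← hibp]
  congr 1 with t
  ring

theorem integrable_add_mul_I_pow_mul_gaussian (x : ℝ) (n : ℕ) :
    Integrable fun t : ℝ => ((x : ℂ) + t * I) ^ n * cexp (-(t : ℂ) ^ 2 / 2) :=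
  (integrable_eval_mul_gaussian ((C (x : ℂ) + X * C I) ^ n)).congr
    (.of_forall fun t => by simp only [eval_pow, eval_add, eval_mul, eval_C, eval_X])

theorem integral_cexp_mul_add_mul_I_mul_gaussian (s : ℂ) (y : ℝ) :
    ∫ t : ℝ, cexp (s * (y + t * I)) * cexp (-(t : ℂ) ^ 2 / 2) =
      √(2 * π) * cexp (s * y - s ^ 2 / 2) := by
  have h (t : ℝ) : cexp (s * (y + t * I)) * cexp (-(t : ℂ) ^ 2 / 2) =
      cexp (-(1 / 2) * t ^ 2 + s * I * t + s * y) := by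
    rw [← Complex.exp_add]
    ring_nf
  simp_rw [h]
  rw [integral_cexp_quadratic (by norm_num),
    show (π : ℂ) / -(-(1 / 2)) = ((2 * π : ℝ) : ℂ) by push_cast; ring,
    ofReal_cpow_one_half (by positivity)]
  congr 2
  rw [mul_pow, I_sq]
  ring

theorem integral_cexp_neg_sq_div_two : ∫ t : ℝ, cexp (-(t : ℂ) ^ 2 / 2) = √(2 * π) := by
  simpa using integral_cexp_mul_add_mul_I_mul_gaussian 0 0

theorem integral_add_mul_I_pow_mul_gaussian (x : ℝ) (n : ℕ) :
    ∫ t : ℝ, ((x : ℂ) + t * I) ^ n * cexp (-(t : ℂ) ^ 2 / 2) =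
      √(2 * π) * (aeval x (hermite n) : ℝ) := by
  set P : ℂ[X] := C (x : ℂ) + C I * X
  have hP (t : ℝ) : P.eval (t : ℂ) = x + t * I := by
    simp only [P, eval_add, eval_C, eval_mul, eval_X]
    ring
  have hP' : derivative P = C I := by simp [P]
  have step (n : ℕ) : ∫ t : ℝ, ((x : ℂ) + t * I) ^ (n + 1) * cexp (-(t : ℂ) ^ 2 / 2) =
      x * (∫ t : ℝ, ((x : ℂ) + t * I) ^ n * cexp (-(t : ℂ) ^ 2 / 2)) +
        I * ∫ t : ℝ, (P ^ n).derivative.eval (t : ℂ) * cexp (-(t : ℂ) ^ 2 / 2) := by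
    rw [← integral_mul_eval_mul_gaussian, ← integral_const_mul, ← integral_const_mul,
      ← integral_add]
    · congr 1 with t
      simp only [eval_pow, hP]
      ring
    · exact (integrable_eval_mul_gaussian (C (x : ℂ) * P ^ n)).congr
        (.of_forall fun t => by simp only [eval_mul, eval_C, eval_pow, hP]; ring)
    · exact (integrable_eval_mul_gaussian (C I * X * P ^ n)).congr
        (.of_forall fun t => by simp only [eval_mul, eval_C, eval_X, eval_pow]; ring)
  induction n using Nat.twoStepInduction with
  | zero => simpa using integral_cexp_neg_sq_div_two
  | one =>
    rw [step 0, pow_zero, derivative_one]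
    simp [integral_cexp_neg_sq_div_two, mul_comm]
  | more n ih0 ih1 =>
    have hderiv : ∫ t : ℝ, (P ^ (n + 1)).derivative.eval (t : ℂ) * cexp (-(t : ℂ) ^ 2 / 2) =
        (n + 1) * I * ∫ t : ℝ, ((x : ℂ) + t * I) ^ n * cexp (-(t : ℂ) ^ 2 / 2) := by
      rw [← integral_const_mul]
      congr 1 with t
      rw [derivative_pow, hP', Nat.add_sub_cancel]
      simp only [eval_mul, eval_C, eval_pow, hP]
      push_cast
      ring
    rw [step (n + 1), hderiv, ih0, ih1]
    simp only [hermite_succ_succ, map_sub, map_mul, aeval_X, map_add, map_one, map_natCast]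
    push_cast
    linear_combination ((n + 1) * √(2 * π) * (aeval x (hermite n) : ℝ) : ℂ) * I_sq

theorem hasSum_integral_pow_mul_div_factorial {α : Type*} [MeasurableSpace α] {μ : Measure α}
    {w g : α → ℂ} (hint : ∀ n : ℕ, Integrable (fun a => w a ^ n * g a) μ)
    (hdom : Integrable (fun a => Real.exp ‖w a‖ * ‖g a‖) μ) :
    HasSum (fun n : ℕ => (∫ a, w a ^ n * g a ∂μ) / n.factorial) (∫ a, cexp (w a) * g a ∂μ) := by
  have hexp (z : ℂ) : HasSum (fun n : ℕ => z ^ n / n.factorial) (cexp z) := by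
    simpa [← Complex.exp_eq_exp_ℂ] using NormedSpace.expSeries_div_hasSum_exp z
  have hnorm (n : ℕ) (a : α) :
      ‖w a ^ n * g a / n.factorial‖ = ‖w a‖ ^ n / n.factorial * ‖g a‖ := by
    rw [norm_div, norm_mul, norm_pow, Complex.norm_natCast]
    ring
  have hsum : Summable fun n : ℕ => ∫ a, ‖w a ^ n * g a / n.factorial‖ ∂μ := by
    refine summable_of_sum_range_le (c := ∫ a, Real.exp ‖w a‖ * ‖g a‖ ∂μ)
      (fun n => integral_nonneg fun a => norm_nonneg _) fun N => ?_
    rw [← integral_finsetSum _ fun n _ => ((hint n).div_const _).norm]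
    refine integral_mono (integrable_finsetSum _ fun n _ => ((hint n).div_const _).norm) hdom
      fun a => ?_
    simp only [hnorm, ← Finset.sum_mul]
    gcongr
    exact Real.sum_le_exp_of_nonneg (norm_nonneg _) N
  have htsum (a : α) : ∑' n : ℕ, w a ^ n * g a / n.factorial = cexp (w a) * g a := by
    simpa only [div_mul_eq_mul_div] using ((hexp (w a)).mul_right (g a)).tsum_eq
  simpa only [integral_div, htsum] using
    hasSum_integral_of_summable_integral_norm (fun n => (hint n).div_const _) hsum

theorem norm_cexp_neg_sq_div_two (t : ℝ) : ‖cexp (-(t : ℂ) ^ 2 / 2)‖ = Real.exp (-t ^ 2 / 2) := by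
  rw [Complex.norm_exp, ← ofReal_pow, ← ofReal_neg, ← ofReal_ofNat, ← ofReal_div, ofReal_re]

theorem integrable_exp_norm_mul_gaussian_prod {ρ : ℝ} (hρ : |ρ| < 1) (x y : ℝ) :
    Integrable (fun p : ℝ × ℝ =>
      Real.exp ‖ρ * ((x : ℂ) + p.1 * I) * ((y : ℂ) + p.2 * I)‖ *
        ‖cexp (-(p.1 : ℂ) ^ 2 / 2) * cexp (-(p.2 : ℂ) ^ 2 / 2)‖) := by
  set k := (1 - |ρ|) / 2
  have hf (a : ℝ) : Integrable fun u : ℝ => Real.exp (|ρ| * a ^ 2 / 2) * Real.exp (-k * u ^ 2) :=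
    (integrable_exp_neg_mul_sq (by simp only [k]; linarith)).const_mul _
  rw [Measure.volume_eq_prod]
  refine ((hf x).mul_prod (hf y)).mono' (by fun_prop) (.of_forall fun p => ?_)
  have hsq (a u : ℝ) : ‖(a : ℂ) + u * I‖ ^ 2 = a ^ 2 + u ^ 2 := by
    rw [Complex.sq_norm, normSq_add_mul_I]
  have hAMGM := mul_le_mul_of_nonneg_left
    (two_mul_le_add_sq ‖(x : ℂ) + p.1 * I‖ ‖(y : ℂ) + p.2 * I‖) (abs_nonneg ρ)
  rw [hsq, hsq] at hAMGM
  simp only [norm_mul, norm_real, Real.norm_eq_abs, norm_cexp_neg_sq_div_two,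
    abs_of_pos (Real.exp_pos _), ← Real.exp_add]
  exact Real.exp_le_exp.mpr (by simp only [k]; linarith)

theorem integrable_cexp_mul_add_mul_I_mul_gaussian_prod {ρ : ℝ} (hρ : |ρ| < 1) (x y : ℝ) :
    Integrable fun p : ℝ × ℝ => cexp (ρ * ((x : ℂ) + p.1 * I) * ((y : ℂ) + p.2 * I)) *
      (cexp (-(p.1 : ℂ) ^ 2 / 2) * cexp (-(p.2 : ℂ) ^ 2 / 2)) := by
  refine (integrable_exp_norm_mul_gaussian_prod hρ x y).mono' (by fun_prop)
    (.of_forall fun p => ?_)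
  rw [norm_mul]
  gcongr
  exact norm_exp_le_exp_norm _

theorem integral_cexp_mul_add_mul_I_mul_gaussian_prod {ρ : ℝ} (hρ : |ρ| < 1) (x y : ℝ) :
    ∫ p : ℝ × ℝ, cexp (ρ * ((x : ℂ) + p.1 * I) * ((y : ℂ) + p.2 * I)) *
        (cexp (-(p.1 : ℂ) ^ 2 / 2) * cexp (-(p.2 : ℂ) ^ 2 / 2)) =
      ((2 * π * (Real.exp (-(x - ρ * y) ^ 2 / (2 * (1 - ρ ^ 2)) + x ^ 2 / 2) /
        √(1 - ρ ^ 2)) : ℝ) : ℂ) := by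
  have hρ2 : 0 < 1 - ρ ^ 2 := by nlinarith [abs_lt.mp hρ, sq_abs ρ]
  have hint := integrable_cexp_mul_add_mul_I_mul_gaussian_prod hρ x y
  rw [Measure.volume_eq_prod] at hint ⊢
  rw [integral_prod _ hint]
  have hinner (u : ℝ) : ∫ v : ℝ, cexp (ρ * ((x : ℂ) + u * I) * ((y : ℂ) + v * I)) *
      (cexp (-(u : ℂ) ^ 2 / 2) * cexp (-(v : ℂ) ^ 2 / 2)) =
      √(2 * π) * cexp (-((1 - ρ ^ 2) / 2 : ℝ) * u ^ 2 + (ρ * (y - ρ * x) : ℝ) * I * u +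
        (ρ * x * y - ρ ^ 2 * x ^ 2 / 2 : ℝ)) := by
    simp_rw [mul_left_comm _ (cexp (-(u : ℂ) ^ 2 / 2))]
    rw [integral_const_mul, integral_cexp_mul_add_mul_I_mul_gaussian, mul_left_comm,
      ← Complex.exp_add]
    congr 2
    push_cast
    ring_nf
    rw [I_sq]
    ring
  simp_rw [hinner]
  rw [integral_const_mul, integral_cexp_quadratic (by rw [neg_re, ofReal_re]; linarith),
    neg_neg, ← ofReal_div, ofReal_cpow_one_half (by positivity)]
  have hexponent : ((ρ * x * y - ρ ^ 2 * x ^ 2 / 2 : ℝ) : ℂ) -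
      ((ρ * (y - ρ * x) : ℝ) * I) ^ 2 / (4 * -((1 - ρ ^ 2) / 2 : ℝ)) =
      ((-(x - ρ * y) ^ 2 / (2 * (1 - ρ ^ 2)) + x ^ 2 / 2 : ℝ) : ℂ) := by
    have : (1 - (ρ : ℂ) ^ 2) ≠ 0 := by exact_mod_cast hρ2.ne'
    rw [mul_pow, I_sq]
    push_cast
    field_simp
    ring
  have hsqrt : √(π / ((1 - ρ ^ 2) / 2)) = √(2 * π) / √(1 - ρ ^ 2) := by
    rw [← Real.sqrt_div (by positivity)]
    congr 1
    field_simp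
  rw [hexponent, ← ofReal_exp, hsqrt]
  norm_cast
  rw [← mul_assoc, ← mul_div_assoc, Real.mul_self_sqrt (by positivity)]
  ring

theorem integrable_pow_mul_gaussian_prod (ρ x y : ℝ) (n : ℕ) :
    Integrable fun p : ℝ × ℝ => (ρ * ((x : ℂ) + p.1 * I) * ((y : ℂ) + p.2 * I)) ^ n *
      (cexp (-(p.1 : ℂ) ^ 2 / 2) * cexp (-(p.2 : ℂ) ^ 2 / 2)) := by
  rw [Measure.volume_eq_prod]
  refine (((integrable_add_mul_I_pow_mul_gaussian x n).const_mul ((ρ : ℂ) ^ n)).mul_prod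
    (integrable_add_mul_I_pow_mul_gaussian y n)).congr (.of_forall fun p => ?_)
  simp only [mul_pow]
  ring

theorem integral_pow_mul_gaussian_prod (ρ x y : ℝ) (n : ℕ) :
    ∫ p : ℝ × ℝ, (ρ * ((x : ℂ) + p.1 * I) * ((y : ℂ) + p.2 * I)) ^ n *
        (cexp (-(p.1 : ℂ) ^ 2 / 2) * cexp (-(p.2 : ℂ) ^ 2 / 2)) =
      ((2 * π * (ρ ^ n * aeval x (hermite n) * aeval y (hermite n)) : ℝ) : ℂ) := by
  have h := integral_prod_mul (μ := volume) (ν := volume)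
    (fun u : ℝ => (ρ : ℂ) ^ n * (((x : ℂ) + u * I) ^ n * cexp (-(u : ℂ) ^ 2 / 2)))
    (fun v : ℝ => ((y : ℂ) + v * I) ^ n * cexp (-(v : ℂ) ^ 2 / 2))
  rw [← Measure.volume_eq_prod, integral_const_mul, integral_add_mul_I_pow_mul_gaussian,
    integral_add_mul_I_pow_mul_gaussian] at h
  rw [← mul_self_sqrt (by positivity : (0 : ℝ) ≤ 2 * π)]
  convert h using 1
  · congr 1 with p
    rw [mul_pow, mul_pow]
    ring
  · push_cast
    ring

theorem poisson_mehler_formula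
    (ρ : ℝ) (hρ : ρ ∈ Set.Ioo (-1 : ℝ) 1) (x y : ℝ) :
    HasSum
      (fun n : ℕ =>
        ρ ^ n * (Polynomial.aeval x (Polynomial.hermite n) : ℝ) *
          (Polynomial.aeval y (Polynomial.hermite n) : ℝ) / (n.factorial : ℝ))
      (Real.exp (-(x - ρ * y) ^ 2 / (2 * (1 - ρ ^ 2)) + x ^ 2 / 2) /
        Real.sqrt (1 - ρ ^ 2)) := by
  have hρ' : |ρ| < 1 := abs_lt.mpr hρ
  have h := hasSum_integral_pow_mul_div_factorial (integrable_pow_mul_gaussian_prod ρ x y)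
    (integrable_exp_norm_mul_gaussian_prod hρ' x y)
  rw [integral_cexp_mul_add_mul_I_mul_gaussian_prod hρ'] at h
  simp only [integral_pow_mul_gaussian_prod] at h
  refine (hasSum_mul_left_iff (by positivity : 2 * π ≠ 0)).mp (hasSum_ofReal.mp ?_)
  convert h using 2 with n
  push_cast
  ring
end
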